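/- Euler scheme error for the integral (Volterra) component: let x̄, b̄ ∈ W^{1,2} on [0,T] with values in ℝ^n, ℝ^d, and let f₂ satisfy ‖f₂(b,x₁) − f₂(b,x₂)‖ ≤ L₁‖x₁−x₂‖ and ‖f₂(b₁,x) − f₂(b₂,x)‖ ≤ L₂‖b₁−b₂‖. Define ȳ(t) = ∫_0^t f₂(b̄(s), x̄(s)) ds, and on a uniform mesh with step h define y^k recursively by y^k(t_{j+1}) = y^k(t_j) + h f₂(b̄(t_j), x^k(t_j)), y^k(0)=0. Then ‖y^k(t_{j+1}) − ȳ(t_{j+1})‖ ≤ L₁ ∑_{i=0}^{j} h ‖x^k(t_i) − x̄(t_i)‖ + T√h (L₁‖ẋ̄‖_{L²} + L₂‖ḃ̄‖_{L²}) for all j = 0,…,k−1. -/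

import Mathlib

/-!
On `[t_j, t_{j+1}]` the local error of the Euler step is the integral of
`f₂(b̄(t_j), x^k_j) - f₂(b̄(s), x̄(s))`. Splitting this difference in three and using the two
Lipschitz bounds, it is at most `L₁‖x^k_j - x̄(t_j)‖ + L₁‖x̄(t_j) - x̄(s)‖ + L₂‖b̄(t_j) - b̄(s)‖`,
and by Cauchy–Schwarz applied to `x̄(s) - x̄(t_j) = ∫ ẋ̄` (and likewise for `b̄`) the last two
terms are at most `√h` times the `L²` norms of the derivatives. The global error telescopes into
the `j + 1` local errors, and `(j + 1) h ≤ T` bounds the accumulated `√h`-terms.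
-/

open MeasureTheory Set Finset

/-- The uniform mesh point `t_j = j·T/k`. -/
noncomputable def meshPt (T : ℝ) (k j : ℕ) : ℝ := j * (T / k)

theorem meshPt_succ_sub_meshPt (T : ℝ) (k j : ℕ) :
    meshPt T k (j + 1) - meshPt T k j = T / k := by
  simp only [meshPt]; push_cast; ring

theorem meshPt_le_meshPt_succ {T : ℝ} (hT : 0 ≤ T) {k j : ℕ} :
    meshPt T k j ≤ meshPt T k (j + 1) := by
  rw [← sub_nonneg, meshPt_succ_sub_meshPt]; positivity

theorem meshPt_mem_Icc {T : ℝ} (hT : 0 ≤ T) {k j : ℕ} (hjk : j ≤ k) :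
    meshPt T k j ∈ Icc 0 T := by
  refine ⟨by unfold meshPt; positivity, ?_⟩
  rcases Nat.eq_zero_or_pos k with rfl | hk
  · simpa [meshPt] using hT
  · calc meshPt T k j ≤ k * (T / k) := by unfold meshPt; gcongr
      _ = T := mul_div_cancel₀ T (by positivity)

theorem sum_range_mul_add_le {h L D T : ℝ} {ε : ℕ → ℝ} {m : ℕ} (hD : 0 ≤ D)
    (hmT : m * h ≤ T) :
    ∑ i ∈ range m, h * (L * ε i + D) ≤ L * ∑ i ∈ range m, h * ε i + T * D := by
  rw [mul_sum, sum_congr rfl fun i _ => (by ring : h * (L * ε i + D) = L * (h * ε i) + h * D),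
    sum_add_distrib, sum_const, card_range, nsmul_eq_mul]
  linarith [mul_le_mul_of_nonneg_right hmT hD]

theorem integral_norm_le_sqrt_mul_sqrt_integral_sq {E : Type*} [NormedAddCommGroup E]
    {f : ℝ → E} {a b : ℝ} (hab : a ≤ b) (hf : MemLp f 2 (volume.restrict (Ioc a b))) :
    ∫ t in a..b, ‖f t‖ ≤ √(b - a) * √(∫ t in a..b, ‖f t‖ ^ 2) := by
  have : IsFiniteMeasure (volume.restrict (Ioc a b)) :=
    isFiniteMeasure_restrict.2 measure_Ioc_lt_top.ne
  have hf' : MemLp (fun t => ‖f t‖) (ENNReal.ofReal 2) (volume.restrict (Ioc a b)) := by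
    simpa using hf.norm
  have hone : MemLp (fun _ : ℝ => (1 : ℝ)) (ENNReal.ofReal 2) (volume.restrict (Ioc a b)) :=
    memLp_const _
  have := integral_mul_norm_le_Lp_mul_Lq Real.HolderConjugate.two_two hf' hone
  simp only [norm_one, mul_one, Real.norm_eq_abs, abs_norm, setIntegral_const,
    Real.volume_real_Ioc_of_le hab, smul_eq_mul, Real.rpow_two, one_pow] at this
  rw [intervalIntegral.integral_of_le hab, intervalIntegral.integral_of_le hab, mul_comm,
    Real.sqrt_eq_rpow, Real.sqrt_eq_rpow]
  exact this

theorem nonneg_of_norm_sub_le_mul {E F : Type*} [NormedAddCommGroup E] [Nontrivial E]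
    [NormedAddCommGroup F] {g : E → F} {L : ℝ} (hg : ∀ x₁ x₂, ‖g x₁ - g x₂‖ ≤ L * ‖x₁ - x₂‖) :
    0 ≤ L := by
  obtain ⟨x, hx⟩ := exists_ne (0 : E)
  have hLx : 0 ≤ L * ‖x‖ := by simpa using (norm_nonneg _).trans (hg x 0)
  exact nonneg_of_mul_nonneg_left hLx (norm_pos_iff.2 hx)

-- a negative `L` forces `E` to be trivial, and then `u' = 0`
theorem mul_sqrt_integral_norm_sq_nonneg {E G : Type*} [NormedAddCommGroup E]
    [NormedAddCommGroup G] {g : E → G} {L : ℝ} (hg : ∀ x₁ x₂, ‖g x₁ - g x₂‖ ≤ L * ‖x₁ - x₂‖)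
    (u' : ℝ → E) (h T : ℝ) :
    0 ≤ L * (√h * √(∫ t in 0..T, ‖u' t‖ ^ 2)) := by
  rcases subsingleton_or_nontrivial E with hE | hE
  · simp [Subsingleton.elim (u' _) 0]
  · have := nonneg_of_norm_sub_le_mul hg
    positivity

section

variable {E F G : Type*} [NormedAddCommGroup E] [NormedSpace ℝ E]
  [NormedAddCommGroup F] [NormedSpace ℝ F] [NormedAddCommGroup G]

theorem norm_smul_sub_intervalIntegral_le [NormedSpace ℝ G] [CompleteSpace G] {φ : ℝ → G}
    {c : G} {a b C : ℝ} (hab : a ≤ b) (hφ : IntervalIntegrable φ volume a b)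
    (hC : ∀ s ∈ Ioc a b, ‖c - φ s‖ ≤ C) :
    ‖(b - a) • c - ∫ s in a..b, φ s‖ ≤ (b - a) * C := by
  rw [← intervalIntegral.integral_const,
    ← intervalIntegral.integral_sub intervalIntegrable_const hφ]
  have := intervalIntegral.norm_integral_le_of_norm_le_const
    (fun s hs => hC s (by rwa [uIoc_of_le hab] at hs))
  rwa [abs_of_nonneg (sub_nonneg.2 hab), mul_comm] at this

variable {T : ℝ} {u u' : ℝ → E}

theorem norm_sub_le_sqrt_mul_sqrt_integral_sq
    (hftc : ∀ a c, a ∈ Icc 0 T → c ∈ Icc 0 T → u c - u a = ∫ τ in a..c, u' τ)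
    (hu' : MemLp u' 2 (volume.restrict (Icc 0 T))) {a s : ℝ} (ha : 0 ≤ a) (has : a ≤ s)
    (hsT : s ≤ T) :
    ‖u s - u a‖ ≤ √(s - a) * √(∫ t in 0..T, ‖u' t‖ ^ 2) := by
  have hsub : Ioc a s ⊆ Icc 0 T := Ioc_subset_Icc_self.trans (Icc_subset_Icc ha hsT)
  have hsq : IntervalIntegrable (fun t => ‖u' t‖ ^ 2) volume 0 T :=
    (intervalIntegrable_iff_integrableOn_Ioc_of_le (ha.trans (has.trans hsT))).2
      (IntegrableOn.mono_set (hu'.integrable_norm_pow two_ne_zero) Ioc_subset_Icc_self)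
  rw [hftc a s ⟨ha, has.trans hsT⟩ ⟨ha.trans has, hsT⟩]
  calc ‖∫ τ in a..s, u' τ‖ ≤ ∫ τ in a..s, ‖u' τ‖ :=
        intervalIntegral.norm_integral_le_integral_norm has
    _ ≤ √(s - a) * √(∫ t in a..s, ‖u' t‖ ^ 2) :=
        integral_norm_le_sqrt_mul_sqrt_integral_sq has
          (hu'.mono_measure (Measure.restrict_mono hsub le_rfl))
    _ ≤ √(s - a) * √(∫ t in 0..T, ‖u' t‖ ^ 2) := by
        gcongr
        exact intervalIntegral.integral_mono_interval ha has hsT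
          (Filter.Eventually.of_forall fun t => sq_nonneg _) hsq

theorem norm_comp_sub_comp_le_mul_sqrt {g : E → G} {L : ℝ}
    (hg : ∀ x₁ x₂, ‖g x₁ - g x₂‖ ≤ L * ‖x₁ - x₂‖)
    (hftc : ∀ a c, a ∈ Icc 0 T → c ∈ Icc 0 T → u c - u a = ∫ τ in a..c, u' τ)
    (hu' : MemLp u' 2 (volume.restrict (Icc 0 T))) {a s h : ℝ} (ha : 0 ≤ a) (has : a ≤ s)
    (hsT : s ≤ T) (hsa : s - a ≤ h) :
    ‖g (u a) - g (u s)‖ ≤ L * (√h * √(∫ t in 0..T, ‖u' t‖ ^ 2)) := by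
  rcases subsingleton_or_nontrivial E with hE | hE
  · rw [Subsingleton.elim (u a) (u s), sub_self, norm_zero]
    exact mul_sqrt_integral_norm_sq_nonneg hg u' h T
  · calc ‖g (u a) - g (u s)‖ ≤ L * ‖u s - u a‖ := norm_sub_rev (u a) (u s) ▸ hg _ _
      _ ≤ L * (√h * √(∫ t in 0..T, ‖u' t‖ ^ 2)) := by
        have := nonneg_of_norm_sub_le_mul hg
        gcongr
        exact (norm_sub_le_sqrt_mul_sqrt_integral_sq hftc hu' ha has hsT).trans (by gcongr)

theorem norm_euler_step_sub_integral_le [NormedSpace ℝ G] [CompleteSpace G] {f : F → E → G}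
    {L₁ L₂ : ℝ} (hfx : ∀ b x₁ x₂, ‖f b x₁ - f b x₂‖ ≤ L₁ * ‖x₁ - x₂‖)
    (hfb : ∀ b₁ b₂ x, ‖f b₁ x - f b₂ x‖ ≤ L₂ * ‖b₁ - b₂‖) {x x' : ℝ → E} {b b' : ℝ → F}
    (hxftc : ∀ a c, a ∈ Icc 0 T → c ∈ Icc 0 T → x c - x a = ∫ τ in a..c, x' τ)
    (hbftc : ∀ a c, a ∈ Icc 0 T → c ∈ Icc 0 T → b c - b a = ∫ τ in a..c, b' τ)
    (hxmem : MemLp x' 2 (volume.restrict (Icc 0 T)))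
    (hbmem : MemLp b' 2 (volume.restrict (Icc 0 T))) {a c : ℝ} (ha : 0 ≤ a) (hac : a ≤ c)
    (hcT : c ≤ T) (hint : IntervalIntegrable (fun s => f (b s) (x s)) volume a c) (ξ : E) :
    ‖(c - a) • f (b a) ξ - ∫ s in a..c, f (b s) (x s)‖ ≤
      (c - a) * (L₁ * ‖ξ - x a‖ + (L₁ * (√(c - a) * √(∫ t in 0..T, ‖x' t‖ ^ 2)) +
        L₂ * (√(c - a) * √(∫ t in 0..T, ‖b' t‖ ^ 2)))) := by
  refine norm_smul_sub_intervalIntegral_le hac hint fun s hs => ?_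
  have hsa : s - a ≤ c - a := by linarith [hs.2]
  have hx := norm_comp_sub_comp_le_mul_sqrt (hfx (b a)) hxftc hxmem ha hs.1.le (hs.2.trans hcT) hsa
  have hb := norm_comp_sub_comp_le_mul_sqrt (fun b₁ b₂ => hfb b₁ b₂ (x s)) hbftc hbmem ha hs.1.le
    (hs.2.trans hcT) hsa
  have h₁ := norm_sub_le_norm_sub_add_norm_sub (f (b a) ξ) (f (b a) (x a)) (f (b s) (x s))
  have h₂ := norm_sub_le_norm_sub_add_norm_sub (f (b a) (x a)) (f (b a) (x s)) (f (b s) (x s))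
  linarith [hfx (b a) ξ (x a)]

end

theorem euler_volterra_error_general {n d : ℕ} (T : ℝ) (hT : 0 < T) (k : ℕ)
    (xbar x' : ℝ → EuclideanSpace ℝ (Fin n)) (bbar b' : ℝ → EuclideanSpace ℝ (Fin d))
    (f₂ : EuclideanSpace ℝ (Fin d) → EuclideanSpace ℝ (Fin n) → EuclideanSpace ℝ (Fin n))
    (L₁ L₂ : ℝ)
    (hf₂x : ∀ b x₁ x₂, ‖f₂ b x₁ - f₂ b x₂‖ ≤ L₁ * ‖x₁ - x₂‖)
    (hf₂b : ∀ b₁ b₂ x, ‖f₂ b₁ x - f₂ b₂ x‖ ≤ L₂ * ‖b₁ - b₂‖)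
    (hxftc : ∀ a c, a ∈ Icc 0 T → c ∈ Icc 0 T → xbar c - xbar a = ∫ τ in a..c, x' τ)
    (hbftc : ∀ a c, a ∈ Icc 0 T → c ∈ Icc 0 T → bbar c - bbar a = ∫ τ in a..c, b' τ)
    (hxmem : MemLp x' 2 (volume.restrict (Icc 0 T)))
    (hbmem : MemLp b' 2 (volume.restrict (Icc 0 T)))
    (hintf : ∀ a c, a ∈ Icc 0 T → c ∈ Icc 0 T →
      IntervalIntegrable (fun u => f₂ (bbar u) (xbar u)) volume a c)
    (ybar : ℝ → EuclideanSpace ℝ (Fin n))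
    (hybar : ∀ t, ybar t = ∫ u in (0:ℝ)..t, f₂ (bbar u) (xbar u))
    (xk : ℕ → EuclideanSpace ℝ (Fin n))
    (y : ℕ → EuclideanSpace ℝ (Fin n)) (hy0 : y 0 = 0)
    (hyrec : ∀ j, y (j + 1) = y j + (T / k) • f₂ (bbar (meshPt T k j)) (xk j)) :
    ∀ j < k, ‖y (j + 1) - ybar (meshPt T k (j + 1))‖ ≤
      L₁ * ∑ i ∈ range (j + 1), (T / k) * ‖xk i - xbar (meshPt T k i)‖ +
      T * Real.sqrt (T / k) *
        (L₁ * Real.sqrt (∫ t in (0:ℝ)..T, ‖x' t‖ ^ 2) +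
         L₂ * Real.sqrt (∫ t in (0:ℝ)..T, ‖b' t‖ ^ 2)) := by
  intro j hj
  have hmesh (i : ℕ) (hi : i ≤ k) : meshPt T k i ∈ Icc 0 T := meshPt_mem_Icc hT.le hi
  set D := L₁ * (√(T / k) * √(∫ t in 0..T, ‖x' t‖ ^ 2)) +
    L₂ * (√(T / k) * √(∫ t in 0..T, ‖b' t‖ ^ 2))
  have hD : 0 ≤ D := add_nonneg (mul_sqrt_integral_norm_sq_nonneg (hf₂x 0) x' _ _)
    (mul_sqrt_integral_norm_sq_nonneg (fun b₁ b₂ => hf₂b b₁ b₂ 0) b' _ _)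
  set e : ℕ → EuclideanSpace ℝ (Fin n) := fun i => y i - ybar (meshPt T k i) with he
  have hstep (i : ℕ) (hi : i < k) :
      dist (e i) (e (i + 1)) ≤ T / k * (L₁ * ‖xk i - xbar (meshPt T k i)‖ + D) := by
    have hinc : e (i + 1) - e i = (T / k) • f₂ (bbar (meshPt T k i)) (xk i) -
        ∫ u in meshPt T k i..meshPt T k (i + 1), f₂ (bbar u) (xbar u) := by
      show y (i + 1) - ybar _ - (y i - ybar _) = _
      rw [hyrec, hybar, hybar, ← intervalIntegral.integral_interval_sub_left
        (hintf _ _ (left_mem_Icc.2 hT.le) (hmesh (i + 1) hi))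
        (hintf _ _ (left_mem_Icc.2 hT.le) (hmesh i hi.le))]
      abel
    have := norm_euler_step_sub_integral_le hf₂x hf₂b hxftc hbftc hxmem hbmem (hmesh i hi.le).1
      (meshPt_le_meshPt_succ hT.le) (hmesh (i + 1) hi).2
      (hintf _ _ (hmesh i hi.le) (hmesh (i + 1) hi)) (xk i)
    rw [meshPt_succ_sub_meshPt] at this
    rwa [dist_comm, dist_eq_norm, hinc]
  have he0 : e 0 = 0 := by simp [he, hy0, hybar, meshPt]
  calc ‖e (j + 1)‖ = dist (e 0) (e (j + 1)) := by rw [he0, dist_zero_left]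
    _ ≤ ∑ i ∈ range (j + 1), T / k * (L₁ * ‖xk i - xbar (meshPt T k i)‖ + D) :=
      dist_le_range_sum_of_dist_le _ fun hi => hstep _ (by omega)
    _ ≤ L₁ * ∑ i ∈ range (j + 1), T / k * ‖xk i - xbar (meshPt T k i)‖ + T * D :=
      sum_range_mul_add_le hD (hmesh (j + 1) hj).2
    _ = _ := by ring

/-- Euler scheme error for the integral (Volterra) component: with
`ybar(t) = ∫₀ᵗ f₂(bbar(s), xbar(s)) ds` and the scheme
`y_{j+1} = y_j + h f₂(bbar(t_j), x^k_j)`, `y_0 = 0`, one has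
`‖y_{j+1} − ybar(t_{j+1})‖ ≤ L₁ ∑_{i≤j} h‖x^k_i − xbar(t_i)‖ + T√h (L₁‖ẋ̄‖_{L²} + L₂‖ḃ̄‖_{L²})`. -/
theorem euler_volterra_error {n d : ℕ} (T : ℝ) (hT : 0 < T) (k : ℕ) (hk : 0 < k)
    (xbar x' : ℝ → EuclideanSpace ℝ (Fin n)) (bbar b' : ℝ → EuclideanSpace ℝ (Fin d))
    (f₂ : EuclideanSpace ℝ (Fin d) → EuclideanSpace ℝ (Fin n) → EuclideanSpace ℝ (Fin n))
    (L₁ L₂ : ℝ)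
    (hf₂x : ∀ b x₁ x₂, ‖f₂ b x₁ - f₂ b x₂‖ ≤ L₁ * ‖x₁ - x₂‖)
    (hf₂b : ∀ b₁ b₂ x, ‖f₂ b₁ x - f₂ b₂ x‖ ≤ L₂ * ‖b₁ - b₂‖)
    (hxftc : ∀ a c, a ∈ Icc 0 T → c ∈ Icc 0 T → xbar c - xbar a = ∫ τ in a..c, x' τ)
    (hbftc : ∀ a c, a ∈ Icc 0 T → c ∈ Icc 0 T → bbar c - bbar a = ∫ τ in a..c, b' τ)
    (hxmem : MemLp x' 2 (volume.restrict (Icc 0 T)))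
    (hbmem : MemLp b' 2 (volume.restrict (Icc 0 T)))
    (hintf : ∀ a c, a ∈ Icc 0 T → c ∈ Icc 0 T →
      IntervalIntegrable (fun u => f₂ (bbar u) (xbar u)) volume a c)
    (ybar : ℝ → EuclideanSpace ℝ (Fin n))
    (hybar : ∀ t, ybar t = ∫ u in (0:ℝ)..t, f₂ (bbar u) (xbar u))
    (xk : ℕ → EuclideanSpace ℝ (Fin n))
    (y : ℕ → EuclideanSpace ℝ (Fin n)) (hy0 : y 0 = 0)
    (hyrec : ∀ j, y (j + 1) = y j + (T / k) • f₂ (bbar (meshPt T k j)) (xk j)) :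
    ∀ j < k, ‖y (j + 1) - ybar (meshPt T k (j + 1))‖ ≤
      L₁ * ∑ i ∈ range (j + 1), (T / k) * ‖xk i - xbar (meshPt T k i)‖ +
      T * Real.sqrt (T / k) *
        (L₁ * Real.sqrt (∫ t in (0:ℝ)..T, ‖x' t‖ ^ 2) +
         L₂ * Real.sqrt (∫ t in (0:ℝ)..T, ‖b' t‖ ^ 2)) :=
  euler_volterra_error_general T hT k xbar x' bbar b' f₂ L₁ L₂ hf₂x hf₂b hxftc hbftc hxmem hbmem
    hintf ybar hybar xk y hy0 hyrec
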